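/- Let n ≥ 2 and let 𝓡 = {x ∈ ℝⁿ : x₁ ≠ 0, x_n ≠ 0, and for every 2 ≤ i ≤ n−1, if x_i = 0 then x_{i−1} x_{i+1} < 0}. Then: (i) 𝓡 is open in ℝⁿ; (ii) 𝓡 is dense in ℝⁿ; and (iii) the sign-change count σ : 𝓡 → ℕ defined by σ(x) = card{i ∈ {1,…,n−1} : x_i x_{i+1} < 0} + card{i ∈ {2,…,n−1} : x_i = 0} is locally constant, hence continuous, on 𝓡. -/

import Mathlib

/-- The domain 𝓡 of the integer-valued Lyapunov function for tridiagonal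
systems: interior zero coordinates must be flanked by coordinates of opposite
sign (0-based indices: coordinates 0 and n−1 are the endpoints). -/
def tridiagR (n : ℕ) (hn : 2 ≤ n) : Set (Fin n → ℝ) :=
  {x | x ⟨0, by omega⟩ ≠ 0 ∧ x ⟨n - 1, by omega⟩ ≠ 0 ∧
    ∀ i : Fin n, ∀ _h1 : 1 ≤ i.val, ∀ _h2 : i.val + 1 < n, x i = 0 →
      x ⟨i.val - 1, by omega⟩ * x ⟨i.val + 1, by omega⟩ < 0}

/-- The sign-change count σ: the number of adjacent sign changes plus the
number of interior zero coordinates. -/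
noncomputable def signChanges (n : ℕ) (x : Fin n → ℝ) : ℕ :=
  {i : Fin n | ∃ h : i.val + 1 < n, x i * x ⟨i.val + 1, h⟩ < 0}.ncard +
    {i : Fin n | 1 ≤ i.val ∧ i.val + 1 < n ∧ x i = 0}.ncard

/-! On `𝓡` every zero coordinate is isolated, so each of the `n - 1` adjacent pairs `(xᵢ, xᵢ₊₁)`
contributes `1 - sgn xᵢ sgn xᵢ₊₁ ∈ {0, 1, 2}` and an interior zero is shared by two pairs
contributing `1` each: `2 σ(x) = ∑ᵢ (1 - sgn xᵢ sgn xᵢ₊₁)`.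
A point `y` close to `x ∈ 𝓡` has the signs of `x` off the zero set of `x`, which already forces
`y ∈ 𝓡` (so `𝓡` is open); and at a zero `k` of `x` the two pairs touching `k` change the sum
by `sgn yₖ (sgn xₖ₋₁ + sgn xₖ₊₁) = 0`. -/

open Finset Filter Topology

/-- With `t = v - u`, the cross terms of `∑ vᵢ vᵢ₊₁ - ∑ uᵢ uᵢ₊₁` regroup as
`∑ₖ tₖ (uₖ₋₁ + uₖ₊₁)` and the quadratic terms `tᵢ tᵢ₊₁` vanish. -/
theorem sum_mul_succ_eq_of_isolated_changes {R : Type*} [CommRing R] (u v : ℕ → R) (N : ℕ)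
    (h : ∀ k ≤ N, u k ≠ v k →
      0 < k ∧ k < N ∧ u (k + 1) = v (k + 1) ∧ u (k - 1) + u (k + 1) = 0) :
    ∑ i ∈ range N, v i * v (i + 1) = ∑ i ∈ range N, u i * u (i + 1) := by
  set t : ℕ → R := fun k => v k - u k
  have h_zero : ∀ k ≤ N, t k * (u (k - 1) + u (k + 1)) = 0 := by
    intro k hk
    by_cases huv : u k = v k
    · simp [t, huv]
    · simp [(h k hk huv).2.2.2]
  have h_isolated : ∀ i < N, t i * t (i + 1) = 0 := by
    intro i hi
    by_cases huv : u i = v i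
    · simp [t, huv]
    · simp [t, (h i hi.le huv).2.2.1]
  have h_first : t 0 = 0 :=
    sub_eq_zero.2 (by_contra fun h0 => (h 0 (Nat.zero_le _) (Ne.symm h0)).1.false)
  have h_last : t N = 0 :=
    sub_eq_zero.2 (by_contra fun hN => (h N le_rfl (Ne.symm hN)).2.1.false)
  have h_shift : ∑ i ∈ range N, (t i * u (i + 1) + u i * t (i + 1)) =
      ∑ k ∈ range (N + 1), t k * (u (k - 1) + u (k + 1)) := by
    simp only [mul_add, sum_add_distrib]
    rw [sum_range_succ', sum_range_succ (fun k => t k * u (k + 1)), h_first, h_last]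
    simp [add_comm, mul_comm]
  calc ∑ i ∈ range N, v i * v (i + 1)
      = ∑ i ∈ range N, (u i * u (i + 1) + (t i * u (i + 1) + u i * t (i + 1)) + t i * t (i + 1)) :=
        sum_congr rfl fun i _ => by simp only [t]; ring
    _ = ∑ i ∈ range N, u i * u (i + 1) := by
        rw [sum_add_distrib, sum_add_distrib, h_shift,
          sum_eq_zero fun k hk => h_zero k (Nat.lt_succ_iff.1 (mem_range.1 hk)),
          sum_eq_zero fun i hi => h_isolated i (mem_range.1 hi), add_zero, add_zero]

theorem one_sub_sign_mul_sign {p q : ℝ} (h : p ≠ 0 ∨ q ≠ 0) :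
    1 - (SignType.sign p : ℤ) * SignType.sign q =
      2 * (if p * q < 0 then 1 else 0) + (if p = 0 then 1 else 0) + (if q = 0 then 1 else 0) := by
  rcases lt_trichotomy p 0 with hp | rfl | hp <;> rcases lt_trichotomy q 0 with hq | rfl | hq <;>
    simp_all [sign_neg, sign_pos, mul_neg_iff, lt_asymm, ne_of_lt, ne_of_gt]

structure FlankedZeros (a : ℕ → ℝ) (N : ℕ) : Prop where
  head_ne_zero : a 0 ≠ 0
  last_ne_zero : a N ≠ 0
  flanked : ∀ k < N, a k = 0 → a (k - 1) * a (k + 1) < 0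

namespace FlankedZeros

variable {a b : ℕ → ℝ} {N : ℕ}

theorem sum_one_sub_sign_mul_sign (ha : FlankedZeros a N) :
    ∑ i ∈ range N, (1 - (SignType.sign (a i) : ℤ) * SignType.sign (a (i + 1))) =
      2 * (#{i ∈ range N | a i * a (i + 1) < 0} + #{i ∈ range N | a i = 0}) := by
  have h_shift : ∑ i ∈ range N, (if a (i + 1) = 0 then 1 else 0 : ℤ) =
      ∑ i ∈ range N, (if a i = 0 then 1 else 0 : ℤ) := by
    have h_succ := sum_range_succ (fun i => if a i = 0 then (1 : ℤ) else 0) N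
    have h_succ' := sum_range_succ' (fun i => if a i = 0 then (1 : ℤ) else 0) N
    simp only [ha.head_ne_zero, ha.last_ne_zero, if_false, add_zero] at h_succ h_succ'
    rw [← h_succ, h_succ']
  have h_pair : ∀ i ∈ range N, a i ≠ 0 ∨ a (i + 1) ≠ 0 := fun i hi =>
    or_iff_not_imp_left.2 fun h0 =>
      right_ne_zero_of_mul (ha.flanked i (mem_range.1 hi) (not_not.1 h0)).ne
  rw [sum_congr rfl fun i hi => one_sub_sign_mul_sign (h_pair i hi), sum_add_distrib,
    sum_add_distrib, h_shift, ← mul_sum]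
  push_cast [card_filter]
  ring

theorem sum_sign_mul_sign_eq (ha : FlankedZeros a N)
    (hb : ∀ k ≤ N, a k ≠ 0 → SignType.sign (b k) = SignType.sign (a k)) :
    ∑ i ∈ range N, (SignType.sign (b i) : ℤ) * SignType.sign (b (i + 1)) =
      ∑ i ∈ range N, (SignType.sign (a i) : ℤ) * SignType.sign (a (i + 1)) := by
  refine sum_mul_succ_eq_of_isolated_changes _ _ N fun k hk hne => ?_
  have hak : a k = 0 := by_contra fun h => hne (by rw [hb k hk h])
  have hlt : k < N := hk.lt_of_ne (by rintro rfl; exact ha.last_ne_zero hak)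
  have hprod := ha.flanked k hlt hak
  refine ⟨Nat.pos_of_ne_zero (by rintro rfl; exact ha.head_ne_zero hak), hlt,
    by rw [hb (k + 1) hlt (right_ne_zero_of_mul hprod.ne)], ?_⟩
  rcases mul_neg_iff.1 hprod with ⟨h1, h2⟩ | ⟨h1, h2⟩ <;> simp [sign_pos, sign_neg, h1, h2]

end FlankedZeros

noncomputable def zeroExtend {α : Type*} [Zero α] {n : ℕ} (x : Fin n → α) : ℕ → α :=
  Function.extend Fin.val x 0

theorem zeroExtend_apply {α : Type*} [Zero α] {n k : ℕ} (x : Fin n → α) (hk : k < n) :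
    zeroExtend x k = x ⟨k, hk⟩ :=
  Fin.val_injective.extend_apply x 0 ⟨k, hk⟩

theorem ncard_setOf_fin_eq_card_filter {n m : ℕ} (hm : m ≤ n) (p : Fin n → Prop) (q : ℕ → Prop)
    [DecidablePred q] (h : ∀ i : Fin n, p i ↔ i.val < m ∧ q i) :
    {i | p i}.ncard = #{k ∈ range m | q k} := by
  rw [← Set.ncard_image_of_injective _ Fin.val_injective, ← Set.ncard_coe_finset]
  congr 1
  ext k
  simp only [Set.mem_image, Set.mem_ofPred_eq, coe_filter, mem_range, h]
  exact ⟨by rintro ⟨i, hi, rfl⟩; exact hi, fun hk => ⟨⟨k, by omega⟩, hk, rfl⟩⟩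

theorem signChanges_eq_card {n : ℕ} {x : Fin n → ℝ} (hn : 2 ≤ n) (hx : x ⟨0, by omega⟩ ≠ 0) :
    signChanges n x =
      #{k ∈ range (n - 1) | zeroExtend x k * zeroExtend x (k + 1) < 0} +
        #{k ∈ range (n - 1) | zeroExtend x k = 0} := by
  unfold signChanges
  congr 1 <;> refine ncard_setOf_fin_eq_card_filter (Nat.sub_le n 1) _ _ fun i => ?_
  · rw [zeroExtend_apply x i.isLt]
    exact ⟨fun ⟨hi, h⟩ => ⟨by omega, by rwa [zeroExtend_apply x hi]⟩,
      fun ⟨hi, h⟩ => ⟨by omega, by rwa [zeroExtend_apply x (by omega)] at h⟩⟩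
  · rw [zeroExtend_apply x i.isLt, Fin.eta]
    exact ⟨fun ⟨_, hi, h⟩ => ⟨by omega, h⟩, fun ⟨hi, h⟩ =>
      ⟨Nat.pos_of_ne_zero fun h0 => hx ((congrArg x (Fin.ext h0.symm)).trans h), by omega, h⟩⟩

theorem flankedZeros_of_mem_tridiagR {n : ℕ} {hn : 2 ≤ n} {x : Fin n → ℝ}
    (hx : x ∈ tridiagR n hn) : FlankedZeros (zeroExtend x) (n - 1) := by
  obtain ⟨h_head, h_last, h_flanked⟩ := hx
  refine ⟨by rwa [zeroExtend_apply x (by omega)], by rwa [zeroExtend_apply x (by omega)],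
    fun k hk h0 => ?_⟩
  rw [zeroExtend_apply x (by omega)] at h0
  have hk0 : 1 ≤ k := Nat.pos_of_ne_zero (by rintro rfl; exact h_head h0)
  rw [zeroExtend_apply x (by omega), zeroExtend_apply x (by omega)]
  exact h_flanked ⟨k, by omega⟩ hk0 (by simp only; omega) h0

theorem signChanges_eq_of_sign_eq {n : ℕ} {hn : 2 ≤ n} {x y : Fin n → ℝ}
    (hx : x ∈ tridiagR n hn) (hy : y ∈ tridiagR n hn)
    (hxy : ∀ i, x i ≠ 0 → SignType.sign (y i) = SignType.sign (x i)) :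
    signChanges n y = signChanges n x := by
  have hX := flankedZeros_of_mem_tridiagR hx
  have hY := flankedZeros_of_mem_tridiagR hy
  have h_sign : ∀ k ≤ n - 1, zeroExtend x k ≠ 0 →
      SignType.sign (zeroExtend y k) = SignType.sign (zeroExtend x k) := by
    intro k hk
    rw [zeroExtend_apply x (by omega), zeroExtend_apply y (by omega)]
    exact hxy _
  have h_sum := hX.sum_sign_mul_sign_eq h_sign
  have h_two : (2 * signChanges n y : ℤ) = 2 * signChanges n x := by
    rw [signChanges_eq_card hn hy.1, signChanges_eq_card hn hx.1]
    push_cast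
    rw [← hX.sum_one_sub_sign_mul_sign, ← hY.sum_one_sub_sign_mul_sign, sum_sub_distrib,
      sum_sub_distrib, h_sum]
  omega

theorem mem_tridiagR_of_sign_eq {n : ℕ} {hn : 2 ≤ n} {x y : Fin n → ℝ} (hx : x ∈ tridiagR n hn)
    (hxy : ∀ i, x i ≠ 0 → SignType.sign (y i) = SignType.sign (x i)) : y ∈ tridiagR n hn := by
  have hne : ∀ i, x i ≠ 0 → y i ≠ 0 := fun i hi =>
    sign_ne_zero.1 (by rw [hxy i hi]; exact sign_ne_zero.2 hi)
  obtain ⟨h_head, h_last, h_flanked⟩ := hx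
  refine ⟨hne _ h_head, hne _ h_last, fun i h1 h2 hyi => ?_⟩
  have hprod := h_flanked i h1 h2 (by_contra fun h => hne i h hyi)
  rw [← sign_eq_neg_one_iff, sign_mul, hxy _ (left_ne_zero_of_mul hprod.ne),
    hxy _ (right_ne_zero_of_mul hprod.ne), ← sign_mul, sign_eq_neg_one_iff]
  exact hprod

theorem eventually_sign_eq {ι : Type*} [Finite ι] (x : ι → ℝ) :
    ∀ᶠ y in 𝓝 x, ∀ i, x i ≠ 0 → SignType.sign (y i) = SignType.sign (x i) := by
  refine eventually_all.2 fun i => ?_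
  by_cases hi : x i = 0
  · simp [hi]
  · have h_sign : ∀ᶠ r in 𝓝 (x i), SignType.sign r = SignType.sign (x i) := by
      simpa only [ContinuousAt, nhds_discrete, tendsto_pure] using continuousAt_sign_of_ne_zero hi
    exact (((continuous_apply i).tendsto x).eventually h_sign).mono fun y hy _ => hy

theorem isOpen_tridiagR (n : ℕ) (hn : 2 ≤ n) : IsOpen (tridiagR n hn) :=
  isOpen_iff_mem_nhds.2 fun x hx =>
    (eventually_sign_eq x).mono fun _ hy => mem_tridiagR_of_sign_eq hx hy

theorem dense_tridiagR (n : ℕ) (hn : 2 ≤ n) : Dense (tridiagR n hn) := by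
  refine (dense_pi Set.univ fun _ _ => dense_compl_singleton (0 : ℝ)).mono fun x hx => ?_
  simp only [Set.mem_pi, Set.mem_univ, Set.mem_compl_iff, Set.mem_singleton_iff,
    forall_const] at hx
  exact ⟨hx _, hx _, fun i _ _ h => absurd h (hx i)⟩

/-- 𝓡 is open and dense in ℝⁿ, and the sign-change count σ is locally
constant (hence continuous) on 𝓡. -/
theorem stmt16 (n : ℕ) (hn : 2 ≤ n) :
    IsOpen (tridiagR n hn) ∧ Dense (tridiagR n hn) ∧
    ∀ x ∈ tridiagR n hn, ∃ ε > (0:ℝ), ∀ y ∈ tridiagR n hn,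
      ‖y - x‖ < ε → signChanges n y = signChanges n x := by
  refine ⟨isOpen_tridiagR n hn, dense_tridiagR n hn, fun x hx => ?_⟩
  obtain ⟨ε, hε, h_ball⟩ := Metric.eventually_nhds_iff.1 (eventually_sign_eq x)
  exact ⟨ε, hε, fun y hy hyx =>
    signChanges_eq_of_sign_eq hx hy (h_ball (by rwa [dist_eq_norm]))⟩
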